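/- Let Ω be a probability amplitude on ℝⁿ, M an n×n real symmetric positive definite matrix, and define the n×n matrix Q := A·M where A_{jk} := −∫ Ω² ∂_j∂_k ln(Ω²) dq. Then every eigenvalue of Q is real and nonnegative, and the mean value of the quantum potential satisfies ⟨Q⟩ ≥ (ħ²/8) λ_max(Q), where λ_max(Q) is the largest eigenvalue of the matrix Q. -/

import Mathlib

open MeasureTheory Matrix Filter

/-- Partial derivative `∂ⱼ f` of a function on `ℝⁿ`. -/
noncomputable def pd {n : ℕ} (j : Fin n) (f : (Fin n → ℝ) → ℝ) (q : Fin n → ℝ) : ℝ :=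
  fderiv ℝ f q (Pi.single j 1)

/-- Mean value of the quantum potential `⟨Q⟩ = -(ħ²/2) ∫ Ω Σⱼₖ Mⱼₖ ∂ⱼ∂ₖΩ`. -/
noncomputable def meanQ {n : ℕ} (hbar : ℝ) (M : Matrix (Fin n) (Fin n) ℝ)
    (Ω : (Fin n → ℝ) → ℝ) : ℝ :=
  -(hbar ^ 2 / 2) * ∫ q, Ω q * ∑ j, ∑ k, M j k * pd j (pd k Ω) q

/-- The matrix `Aⱼₖ = -∫ Ω² ∂ⱼ∂ₖ ln Ω²`. -/
noncomputable def matA {n : ℕ} (Ω : (Fin n → ℝ) → ℝ) : Matrix (Fin n) (Fin n) ℝ :=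
  Matrix.of fun j k => -∫ q, (Ω q) ^ 2 * pd j (pd k (fun x => Real.log ((Ω x) ^ 2))) q

/-!
Integrating by parts, `∫ Ω ∂ⱼ∂ₖΩ = -Gⱼₖ` for the Gram matrix `Gⱼₖ = ∫ ∂ⱼΩ ∂ₖΩ`, which is positive
semidefinite; pointwise `Ω² ∂ⱼ∂ₖ ln Ω² = 2 Ω ∂ⱼ∂ₖΩ - 2 ∂ⱼΩ ∂ₖΩ`, so `A = 4G` and
`⟨Q⟩ = (ħ²/8) tr(AM)`. Conjugating by `√M` makes `AM` similar to the positive semidefinite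
matrix `√M A √M`: its eigenvalues are real and nonnegative, so the largest is at most their sum,
the trace.
-/

section PartialDerivative

variable {n : ℕ} {f g : (Fin n → ℝ) → ℝ} {q : Fin n → ℝ}

lemma pd_mul (hf : DifferentiableAt ℝ f q) (hg : DifferentiableAt ℝ g q) (j : Fin n) :
    pd j (fun x => f x * g x) q = pd j f q * g q + f q * pd j g q := by
  simp only [pd, fderiv_fun_mul hf hg, _root_.add_apply, _root_.smul_apply, smul_eq_mul]
  ring

lemma pd_const_mul (hf : DifferentiableAt ℝ f q) (c : ℝ) (j : Fin n) :
    pd j (fun x => c * f x) q = c * pd j f q := by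
  simp only [pd, fderiv_const_mul hf, _root_.smul_apply, smul_eq_mul]

lemma pd_log (hf : DifferentiableAt ℝ f q) (hq : f q ≠ 0) (j : Fin n) :
    pd j (fun x => Real.log (f x)) q = pd j f q / f q := by
  simp only [pd, fderiv.log hf hq, _root_.smul_apply, smul_eq_mul]
  exact inv_mul_eq_div _ _

lemma ContDiff.differentiable_pd (hf : ContDiff ℝ 2 f) (k : Fin n) :
    Differentiable ℝ (pd k f) :=
  ((hf.fderiv_right (m := 1) (by norm_num)).clm_apply contDiff_const).differentiable
    (by norm_num)

lemma sq_mul_pd_pd_log_sq (hf : ContDiff ℝ 2 f) (hf0 : ∀ x, f x ≠ 0) (j k : Fin n)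
    (q : Fin n → ℝ) :
    f q ^ 2 * pd j (pd k fun x => Real.log (f x ^ 2)) q =
      2 * (f q * pd j (pd k f) q) - 2 * (pd j f q * pd k f q) := by
  have hdf : Differentiable ℝ f := hf.differentiable (by norm_num)
  have hdiv : DifferentiableAt ℝ (fun x => pd k f x / f x) q := by
    simpa only [div_eq_mul_inv] using
      (hf.differentiable_pd k q).fun_mul ((hdf q).fun_inv (hf0 q))
  have hpd_log : pd k (fun x => Real.log (f x ^ 2)) = fun x => 2 * (pd k f x / f x) := by
    funext x
    simp_rw [Real.log_pow, Nat.cast_ofNat]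
    rw [pd_const_mul ((hdf x).log (hf0 x)), pd_log (hdf x) (hf0 x)]
  have hcancel : f q * (pd k f q / f q) = pd k f q := mul_div_cancel₀ _ (hf0 q)
  -- `∂ⱼ` of the identity `f * (∂ₖf / f) = ∂ₖf`, in place of a quotient rule
  have hprod : pd j f q * (pd k f q / f q) + f q * pd j (fun x => pd k f x / f x) q =
      pd j (pd k f) q := by
    rw [← pd_mul (hdf q) hdiv]
    exact congrArg (fun F => pd j F q) (funext fun x => mul_div_cancel₀ _ (hf0 x))
  rw [hpd_log, pd_const_mul hdiv]
  linear_combination (2 * f q) * hprod - (2 * pd j f q) * hcancel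

end PartialDerivative

section GradGram

variable {n : ℕ} {Ω : (Fin n → ℝ) → ℝ}

-- A quarter of the Fisher information matrix of the density `Ω²`.
noncomputable def gradGram (Ω : (Fin n → ℝ) → ℝ) : Matrix (Fin n) (Fin n) ℝ :=
  of fun j k => ∫ q, pd j Ω q * pd k Ω q

lemma gradGram_isSymm : (gradGram Ω).IsSymm :=
  IsSymm.ext fun j k => by simp only [gradGram, of_apply, mul_comm]

lemma dotProduct_gradGram_mulVec (hint : ∀ j k, Integrable fun q => pd j Ω q * pd k Ω q)
    (x : Fin n → ℝ) : x ⬝ᵥ gradGram Ω *ᵥ x = ∫ q, (∑ j, x j * pd j Ω q) ^ 2 := by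
  have hsq : ∀ q, (∑ j, x j * pd j Ω q) ^ 2 =
      ∑ j, ∑ k, x j * x k * (pd j Ω q * pd k Ω q) := fun q => by
    rw [sq, Finset.sum_mul_sum]
    exact Finset.sum_congr rfl fun j _ => Finset.sum_congr rfl fun k _ => by ring
  simp_rw [hsq]
  rw [integral_finsetSum _ fun j _ => integrable_finsetSum _ fun k _ => (hint j k).const_mul _]
  simp_rw [integral_finsetSum _ fun k _ => (hint _ k).const_mul _, integral_const_mul]
  simp only [dotProduct, mulVec, gradGram, of_apply, Finset.mul_sum]
  exact Finset.sum_congr rfl fun j _ => Finset.sum_congr rfl fun k _ => by ring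

lemma gradGram_posSemidef (hint : ∀ j k, Integrable fun q => pd j Ω q * pd k Ω q) :
    (gradGram Ω).PosSemidef :=
  PosSemidef.of_dotProduct_mulVec_nonneg (isHermitian_iff_isSymm.2 gradGram_isSymm) fun x => by
    rw [star_trivial, dotProduct_gradGram_mulVec hint]
    exact integral_nonneg fun q => sq_nonneg _

lemma integral_mul_pd_pd_eq_neg_gradGram (hΩc : ContDiff ℝ 2 Ω)
    (hint1 : ∀ j k, Integrable fun q => Ω q * pd j (pd k Ω) q)
    (hint2 : ∀ j k, Integrable fun q => pd j Ω q * pd k Ω q)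
    (hbd1 : ∀ j k, ∫ q, pd j (fun x => Ω x * pd k Ω x) q = 0) (j k : Fin n) :
    ∫ q, Ω q * pd j (pd k Ω) q = -gradGram Ω j k := by
  have hdΩ : Differentiable ℝ Ω := hΩc.differentiable (by norm_num)
  have h := hbd1 j k
  simp_rw [pd_mul (hdΩ _) (hΩc.differentiable_pd k _)] at h
  rw [integral_add (hint2 j k) (hint1 j k)] at h
  rw [gradGram, of_apply]
  linarith

lemma matA_eq_four_smul_gradGram (hΩc : ContDiff ℝ 2 Ω) (hΩ0 : ∀ q, Ω q ≠ 0)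
    (hint1 : ∀ j k, Integrable fun q => Ω q * pd j (pd k Ω) q)
    (hint2 : ∀ j k, Integrable fun q => pd j Ω q * pd k Ω q)
    (hbd1 : ∀ j k, ∫ q, pd j (fun x => Ω x * pd k Ω x) q = 0) :
    matA Ω = (4 : ℝ) • gradGram Ω := by
  ext j k
  simp_rw [matA, of_apply, sq_mul_pd_pd_log_sq hΩc hΩ0]
  rw [integral_sub ((hint1 j k).const_mul 2) ((hint2 j k).const_mul 2), integral_const_mul,
    integral_const_mul, integral_mul_pd_pd_eq_neg_gradGram hΩc hint1 hint2 hbd1]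
  simp only [Matrix.smul_apply, smul_eq_mul, gradGram, of_apply]
  ring

lemma meanQ_eq_trace (hΩc : ContDiff ℝ 2 Ω) (hΩ0 : ∀ q, Ω q ≠ 0)
    (hint1 : ∀ j k, Integrable fun q => Ω q * pd j (pd k Ω) q)
    (hint2 : ∀ j k, Integrable fun q => pd j Ω q * pd k Ω q)
    (hbd1 : ∀ j k, ∫ q, pd j (fun x => Ω x * pd k Ω x) q = 0) (hbar : ℝ)
    (M : Matrix (Fin n) (Fin n) ℝ) :
    meanQ hbar M Ω = hbar ^ 2 / 8 * (matA Ω * M).trace := by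
  have hsum : ∫ q, Ω q * ∑ j, ∑ k, M j k * pd j (pd k Ω) q =
      ∑ j, ∑ k, M j k * ∫ q, Ω q * pd j (pd k Ω) q := by
    simp_rw [Finset.mul_sum, mul_left_comm (Ω _)]
    rw [integral_finsetSum _ fun j _ => integrable_finsetSum _ fun k _ =>
      (hint1 j k).const_mul (M j k)]
    simp_rw [integral_finsetSum _ fun k _ => (hint1 _ k).const_mul _, integral_const_mul]
  have htrace : (matA Ω * M).trace = 4 * ∑ j, ∑ k, M j k * gradGram Ω j k := by
    rw [matA_eq_four_smul_gradGram hΩc hΩ0 hint1 hint2 hbd1, smul_mul, trace_smul, trace_mul_comm]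
    simp only [trace, diag, mul_apply, smul_eq_mul, gradGram_isSymm.apply]
  rw [meanQ, hsum, htrace]
  simp only [integral_mul_pd_pd_eq_neg_gradGram hΩc hint1 hint2 hbd1, mul_neg,
    Finset.sum_neg_distrib]
  ring

end GradGram

namespace Matrix

open scoped MatrixOrder ComplexOrder

variable {ι : Type*} [Fintype ι] [DecidableEq ι]

lemma PosSemidef.exists_units_conj_eq_mul_posDef {A M : Matrix ι ι ℝ} (hA : A.PosSemidef)
    (hM : M.PosDef) : ∃ (u : (Matrix ι ι ℝ)ˣ) (S : Matrix ι ι ℝ),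
      S.PosSemidef ∧ A * M = (↑u⁻¹ : Matrix ι ι ℝ) * S * (↑u : Matrix ι ι ℝ) := by
  have hBH : (CFC.sqrt M)ᴴ = CFC.sqrt M :=
    (nonneg_iff_posSemidef.1 (CFC.sqrt_nonneg M)).isHermitian
  obtain ⟨u, hu⟩ := (CFC.isUnit_sqrt_iff M hM.posSemidef.nonneg).2 hM.isUnit
  have hS := hA.mul_mul_conjTranspose_same (CFC.sqrt M)
  rw [hBH, ← hu] at hS
  refine ⟨u, _, hS, ?_⟩
  rw [mul_assoc (u : Matrix ι ι ℝ) A, Units.inv_mul_cancel_left, mul_assoc, hu,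
    CFC.sqrt_mul_sqrt_self M hM.posSemidef.nonneg]

lemma PosSemidef.map_ofReal {S : Matrix ι ι ℝ} (hS : S.PosSemidef) :
    (S.map ((↑) : ℝ → ℂ)).PosSemidef := by
  have hX : (CFC.sqrt S)ᴴ = CFC.sqrt S :=
    (nonneg_iff_posSemidef.1 (CFC.sqrt_nonneg S)).isHermitian
  rw [← CFC.sqrt_mul_sqrt_self S hS.nonneg]
  nth_rw 1 [← hX]
  change (Complex.ofRealHom.mapMatrix (_ * _)).PosSemidef
  rw [map_mul]
  change (((CFC.sqrt S)ᴴ.map ((↑) : ℝ → ℂ)) * (CFC.sqrt S).map ((↑) : ℝ → ℂ)).PosSemidef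
  rw [conjTranspose_map _ (fun _ => by simp)]
  exact posSemidef_conjTranspose_mul_self _

lemma spectrum_map_ofReal_units_conj (u : (Matrix ι ι ℝ)ˣ) (S : Matrix ι ι ℝ) :
    spectrum ℂ (((↑u⁻¹ : Matrix ι ι ℝ) * S * (↑u : Matrix ι ι ℝ)).map ((↑) : ℝ → ℂ)) =
      spectrum ℂ (S.map ((↑) : ℝ → ℂ)) := by
  let v : (Matrix ι ι ℂ)ˣ := Units.map Complex.ofRealHom.mapMatrix.toMonoidHom u
  have hv : ((↑u⁻¹ : Matrix ι ι ℝ) * S * (↑u : Matrix ι ι ℝ)).map ((↑) : ℝ → ℂ) =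
      (↑v⁻¹ : Matrix ι ι ℂ) * S.map ((↑) : ℝ → ℂ) * (↑v : Matrix ι ι ℂ) :=
    (map_mul (Complex.ofRealHom.mapMatrix (m := ι)) _ _).trans
      (congrArg (· * _) (map_mul (Complex.ofRealHom.mapMatrix (m := ι)) _ _))
  rw [hv, spectrum.units_conjugate']

lemma PosSemidef.im_eq_zero_and_re_nonneg_of_mem_spectrum_map_ofReal {S : Matrix ι ι ℝ}
    (hS : S.PosSemidef) {μ : ℂ} (hμ : μ ∈ spectrum ℂ (S.map ((↑) : ℝ → ℂ))) :
    μ.im = 0 ∧ 0 ≤ μ.re := by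
  obtain ⟨hre, him⟩ := Complex.nonneg_iff.1
    ((posSemidef_iff_isHermitian_and_spectrum_nonneg.1 hS.map_ofReal).2 hμ)
  exact ⟨him.symm, hre⟩

lemma PosSemidef.exists_isGreatest_spectrum_le_trace [Nonempty ι] {S : Matrix ι ι ℝ}
    (hS : S.PosSemidef) : ∃ l, IsGreatest (spectrum ℝ S) l ∧ l ≤ S.trace := by
  obtain ⟨i, -, hi⟩ :=
    Finset.exists_max_image Finset.univ hS.isHermitian.eigenvalues Finset.univ_nonempty
  refine ⟨hS.isHermitian.eigenvalues i, ?_, ?_⟩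
  · rw [hS.isHermitian.spectrum_real_eq_range_eigenvalues]
    exact ⟨⟨i, rfl⟩, by rintro _ ⟨j, rfl⟩; exact hi j (Finset.mem_univ j)⟩
  · rw [hS.isHermitian.trace_eq_sum_eigenvalues]
    exact Finset.single_le_sum (fun j _ => hS.eigenvalues_nonneg j) (Finset.mem_univ i)

end Matrix

theorem meanQ_ge_eigenvalue_bound_general {n : ℕ} (hn : 1 ≤ n) (hbar : ℝ)
    (Ω : (Fin n → ℝ) → ℝ) (hΩc : ContDiff ℝ 2 Ω) (hΩpos : ∀ q, 0 < Ω q)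
    (M : Matrix (Fin n) (Fin n) ℝ) (hM : M.PosDef)
    -- all integrals appearing converge absolutely
    (hint1 : ∀ j k, Integrable (fun q => Ω q * pd j (pd k Ω) q))
    (hint2 : ∀ j k, Integrable (fun q => pd j Ω q * pd k Ω q))
    -- all boundary terms in integration by parts vanish
    (hbd1 : ∀ j k, ∫ q, pd j (fun x => Ω x * pd k Ω x) q = 0) :
    (∀ μ ∈ spectrum ℂ ((matA Ω * M).map (Complex.ofReal : ℝ → ℂ)),
      μ.im = 0 ∧ 0 ≤ μ.re) ∧
    ∃ lmax ∈ spectrum ℝ (matA Ω * M),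
      (∀ r ∈ spectrum ℝ (matA Ω * M), r ≤ lmax) ∧
      meanQ hbar M Ω ≥ hbar ^ 2 / 8 * lmax := by
  have : Nonempty (Fin n) := ⟨⟨0, hn⟩⟩
  have hΩ0 : ∀ q, Ω q ≠ 0 := fun q => (hΩpos q).ne'
  have hA : (matA Ω).PosSemidef := by
    rw [matA_eq_four_smul_gradGram hΩc hΩ0 hint1 hint2 hbd1]
    exact (gradGram_posSemidef hint2).smul (by norm_num)
  obtain ⟨u, S, hS, hAM⟩ := hA.exists_units_conj_eq_mul_posDef hM
  refine ⟨fun μ hμ => ?_, ?_⟩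
  · rw [hAM, spectrum_map_ofReal_units_conj] at hμ
    exact hS.im_eq_zero_and_re_nonneg_of_mem_spectrum_map_ofReal hμ
  · obtain ⟨lmax, ⟨hmem, hmax⟩, hle⟩ := hS.exists_isGreatest_spectrum_le_trace
    rw [hAM, spectrum.units_conjugate']
    refine ⟨lmax, hmem, hmax, ?_⟩
    rw [meanQ_eq_trace hΩc hΩ0 hint1 hint2 hbd1, hAM, trace_units_conj']
    gcongr

/-- every eigenvalue of `Q = A⋅M` is real and nonnegative and
`⟨Q⟩ ≥ (ħ²/8) λmax(Q)`. -/
theorem meanQ_ge_eigenvalue_bound {n : ℕ} (hn : 1 ≤ n) (hbar : ℝ) (hhbar : 0 < hbar)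
    (Ω : (Fin n → ℝ) → ℝ) (hΩc : ContDiff ℝ 2 Ω) (hΩpos : ∀ q, 0 < Ω q)
    (hΩnorm : ∫ q, (Ω q) ^ 2 = 1)
    (M : Matrix (Fin n) (Fin n) ℝ) (hM : M.PosDef)
    -- all integrals appearing converge absolutely
    (hint1 : ∀ j k, Integrable (fun q => Ω q * pd j (pd k Ω) q))
    (hint2 : ∀ j k, Integrable (fun q => pd j Ω q * pd k Ω q))
    (hint3 : ∀ j k, Integrable (fun q =>
      (Ω q) ^ 2 * pd j (pd k (fun x => Real.log ((Ω x) ^ 2))) q))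
    (hint4 : ∀ j k, Integrable (fun q => (Ω q) ^ 2 *
      (pd j (fun x => Real.log ((Ω x) ^ 2)) q * pd k (fun x => Real.log ((Ω x) ^ 2)) q)))
    -- all boundary terms in integration by parts vanish
    (hbd1 : ∀ j k, ∫ q, pd j (fun x => Ω x * pd k Ω x) q = 0)
    (hbd2 : ∀ k, ∫ q, pd k (fun x => (Ω x) ^ 2) q = 0) :
    (∀ μ ∈ spectrum ℂ ((matA Ω * M).map (Complex.ofReal : ℝ → ℂ)),
      μ.im = 0 ∧ 0 ≤ μ.re) ∧
    ∃ lmax ∈ spectrum ℝ (matA Ω * M),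
      (∀ r ∈ spectrum ℝ (matA Ω * M), r ≤ lmax) ∧
      meanQ hbar M Ω ≥ hbar ^ 2 / 8 * lmax :=
  meanQ_ge_eigenvalue_bound_general hn hbar Ω hΩc hΩpos M hM hint1 hint2 hbd1
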